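/- arXiv:2003.12933 — 5 statements merged into one kernel-verified Lean document; each statement's English description precedes it below -/
import Mathlib

section
/- Let β ≠ 0, L and K be real numbers with sin(βL) ≠ 0, and let Z : ℝ → ℝ be twice differentiable with Z''(z) = -β² Z(z) for all z and with Z'(0) = K and Z'(L) = K. Then for every z, Z(z) = (K/β)·(cos(β(L − z)) − cos(β z))/sin(βL). -/
/-!
Rotating the phase-plane point `(β Z, Z')` by the angle `-β z` gives a vector whose derivative
vanishes by the equation `Z'' = -β² Z`, so it is constant. Hence
`β Z z = β Z 0 cos (β z) + Z' 0 sin (β z)` and `Z' z = Z' 0 cos (β z) - β Z 0 sin (β z)`;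
the two Neumann conditions then pin down `β Z 0 sin (β L) = K (cos (β L) - 1)`, which gives the formula.
-/

open Real

namespace HarmonicOscillator

variable {β : ℝ} {Z : ℝ → ℝ} (hZ : Differentiable ℝ Z) (hZ' : Differentiable ℝ (deriv Z))
  (hODE : ∀ z, deriv (deriv Z) z = -β ^ 2 * Z z)
include hZ hZ' hODE

lemma rotated_cos_eq (x : ℝ) :
    β * Z x * cos (β * x) - deriv Z x * sin (β * x) = β * Z 0 := by
  have hderiv : ∀ y, HasDerivAt
      (fun y => β * Z y * cos (β * y) - deriv Z y * sin (β * y)) 0 y := by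
    intro y
    refine ((((hZ y).hasDerivAt.const_mul β).mul (hasDerivAt_const_mul β).cos).sub
      ((hZ' y).hasDerivAt.mul (hasDerivAt_const_mul β).sin)).congr_deriv ?_
    rw [hODE]
    ring
  simpa using is_const_of_deriv_eq_zero (fun y => (hderiv y).differentiableAt)
    (fun y => (hderiv y).deriv) x 0

lemma rotated_sin_eq (x : ℝ) :
    β * Z x * sin (β * x) + deriv Z x * cos (β * x) = deriv Z 0 := by
  have hderiv : ∀ y, HasDerivAt
      (fun y => β * Z y * sin (β * y) + deriv Z y * cos (β * y)) 0 y := by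
    intro y
    refine ((((hZ y).hasDerivAt.const_mul β).mul (hasDerivAt_const_mul β).sin).add
      ((hZ' y).hasDerivAt.mul (hasDerivAt_const_mul β).cos)).congr_deriv ?_
    rw [hODE]
    ring
  simpa using is_const_of_deriv_eq_zero (fun y => (hderiv y).differentiableAt)
    (fun y => (hderiv y).deriv) x 0

lemma mul_eq_cos_add_sin (x : ℝ) :
    β * Z x = β * Z 0 * cos (β * x) + deriv Z 0 * sin (β * x) := by
  linear_combination cos (β * x) * rotated_cos_eq hZ hZ' hODE x
    + sin (β * x) * rotated_sin_eq hZ hZ' hODE x - β * Z x * sin_sq_add_cos_sq (β * x)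

lemma deriv_eq_cos_sub_sin (x : ℝ) :
    deriv Z x = deriv Z 0 * cos (β * x) - β * Z 0 * sin (β * x) := by
  linear_combination -sin (β * x) * rotated_cos_eq hZ hZ' hODE x
    + cos (β * x) * rotated_sin_eq hZ hZ' hODE x - deriv Z x * sin_sq_add_cos_sq (β * x)

end HarmonicOscillator

open HarmonicOscillator in
/-- Solution of `Z'' = -β² Z` with Neumann boundary conditions `Z'(0) = Z'(L) = K`:
`Z(z) = (K/β) (cos(β(L - z)) - cos(βz)) / sin(βL)`. -/
theorem stmt_1 (β L K : ℝ) (hβ : β ≠ 0) (hsin : Real.sin (β * L) ≠ 0) (Z : ℝ → ℝ)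
    (hZ : Differentiable ℝ Z) (hZ' : Differentiable ℝ (deriv Z))
    (hODE : ∀ z, deriv (deriv Z) z = -β ^ 2 * Z z)
    (h0 : deriv Z 0 = K) (hL : deriv Z L = K) :
    ∀ z, Z z = (K / β) * (Real.cos (β * (L - z)) - Real.cos (β * z)) / Real.sin (β * L) := by
  intro z
  have hZz := mul_eq_cos_add_sin hZ hZ' hODE z
  have hZ0 : β * Z 0 * sin (β * L) = K * (cos (β * L) - 1) := by
    linear_combination deriv_eq_cos_sub_sin hZ hZ' hODE L - hL + cos (β * L) * h0
  rw [h0] at hZz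
  rw [mul_sub β, cos_sub]
  field_simp
  linear_combination sin (β * L) * hZz + cos (β * z) * hZ0
end

section
/- Let β ≠ 0, L and K be real numbers with sin(βL) ≠ 0, and let Z : ℝ → ℝ be twice differentiable with Z''(z) = -β² Z(z) for all z and with Z'(0) = K and Z'(L) = K. Then Z(L) = (K/β)·tan(βL/2). (Note that sin(βL) ≠ 0 forces cos(βL/2) ≠ 0, so the tangent is defined.) -/
/-!
The quantity `β Z(z) sin(βz) + Z'(z) cos(βz)` is a first integral of `Z'' = -β² Z`: its derivative
is `(Z'' + β² Z) cos(βz) = 0`. Comparing its values at `0` and `L` gives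
`β Z(L) sin(βL) = K (1 - cos(βL))`, and the half-angle formula `(1 - cos x) / sin x = tan(x/2)`
finishes the computation.
-/

open Real

theorem Real.tan_half_eq_one_sub_cos_div_sin {x : ℝ} (hx : sin x ≠ 0) :
    tan (x / 2) = (1 - cos x) / sin x := by
  have hsin : sin x = 2 * sin (x / 2) * cos (x / 2) := by
    rw [← sin_two_mul]; ring_nf
  have hcos : cos x = 1 - 2 * sin (x / 2) ^ 2 := by
    have := cos_two_mul' (x / 2)
    rw [mul_div_cancel₀ x two_ne_zero] at this
    linear_combination this + sin_sq_add_cos_sq (x / 2)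
  have hs : sin (x / 2) ≠ 0 := fun h => hx (by rw [hsin, h, mul_zero, zero_mul])
  have hc : cos (x / 2) ≠ 0 := fun h => hx (by rw [hsin, h, mul_zero])
  rw [tan_eq_sin_div_cos, hsin, hcos]
  field_simp
  ring

section Oscillator

variable {β : ℝ} {Z : ℝ → ℝ}

theorem hasDerivAt_oscillator_firstIntegral (hZ : Differentiable ℝ Z)
    (hZ' : Differentiable ℝ (deriv Z)) (hODE : ∀ z, deriv (deriv Z) z = -β ^ 2 * Z z) (z : ℝ) :
    HasDerivAt (fun z => β * Z z * sin (β * z) + deriv Z z * cos (β * z)) 0 z := by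
  have hβz : HasDerivAt (fun z => β * z) β z := by
    simpa using (hasDerivAt_id z).const_mul β
  have hZ'z : HasDerivAt (deriv Z) (-β ^ 2 * Z z) z := hODE z ▸ (hZ' z).hasDerivAt
  refine ((((hZ z).hasDerivAt.const_mul β).mul hβz.sin).add (hZ'z.mul hβz.cos)).congr_deriv ?_
  ring

theorem oscillator_firstIntegral_eq (hZ : Differentiable ℝ Z)
    (hZ' : Differentiable ℝ (deriv Z)) (hODE : ∀ z, deriv (deriv Z) z = -β ^ 2 * Z z) (z : ℝ) :
    β * Z z * sin (β * z) + deriv Z z * cos (β * z) = deriv Z 0 := by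
  have hderiv := hasDerivAt_oscillator_firstIntegral hZ hZ' hODE
  simpa using is_const_of_deriv_eq_zero (fun z => (hderiv z).differentiableAt)
    (fun z => (hderiv z).deriv) z 0

end Oscillator

/-- Theorem 1 of the paper (boundary-value form): for a solution of `Z'' = -β² Z`
with `Z'(0) = Z'(L) = K` and `sin(βL) ≠ 0`, the surface value is
`Z(L) = (K/β) tan(βL/2)`. -/
theorem stmt_2 (β L K : ℝ) (hβ : β ≠ 0) (hsin : Real.sin (β * L) ≠ 0) (Z : ℝ → ℝ)
    (hZ : Differentiable ℝ Z) (hZ' : Differentiable ℝ (deriv Z))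
    (hODE : ∀ z, deriv (deriv Z) z = -β ^ 2 * Z z)
    (h0 : deriv Z 0 = K) (hL : deriv Z L = K) :
    Z L = (K / β) * Real.tan (β * L / 2) := by
  have hconserved := oscillator_firstIntegral_eq hZ hZ' hODE L
  rw [h0, hL] at hconserved
  rw [tan_half_eq_one_sub_cos_div_sin hsin]
  field_simp
  linear_combination hconserved
end

section
/- Let β̂ ∈ ℂ with β̂ ≠ 0, let L be a real number with Complex.sin(β̂L) ≠ 0, let K ∈ ℂ, and let Z : ℝ → ℂ be twice differentiable with Z''(z) = -β̂² Z(z) for all z and with Z'(0) = K and Z'(L) = K. Then Z(L) = (K/β̂)·tan(β̂L/2) (complex tangent). -/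
/-!
Multiplying the equation `Z'' = -β² Z` by the integrating factors `sin (β z)` and `cos (β z)`
shows that `β Z(z) sin (β z) + Z'(z) cos (β z)` is constant. Comparing its values at `0` and `L`
gives `β Z(L) sin (βL) = K (1 - cos (βL))`, and `(1 - cos θ) / sin θ = tan (θ / 2)`.
-/

open Complex

theorem Complex.one_sub_cos_div_sin {θ : ℂ} (h : sin θ ≠ 0) :
    (1 - cos θ) / sin θ = tan (θ / 2) := by
  have hsin : sin θ = 2 * sin (θ / 2) * cos (θ / 2) := by
    rw [← sin_two_mul, mul_div_cancel₀ _ two_ne_zero]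
  have hcos : cos θ = 1 - 2 * sin (θ / 2) ^ 2 := by
    have h2 := cos_two_mul (θ / 2)
    rw [mul_div_cancel₀ _ two_ne_zero, cos_sq'] at h2
    linear_combination h2
  have hcos_half : cos (θ / 2) ≠ 0 := fun h' => h (by rw [hsin, h', mul_zero])
  have hsin_half : sin (θ / 2) ≠ 0 := fun h' => h (by rw [hsin, h', mul_zero, zero_mul])
  rw [tan_eq_sin_div_cos, hsin, hcos]
  field_simp
  ring

theorem hasDerivAt_sin_mul_ofReal (β : ℂ) (z : ℝ) :
    HasDerivAt (fun x : ℝ => sin (β * x)) (cos (β * z) * β) z := by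
  simpa using ((hasDerivAt_id (z : ℂ)).const_mul β).csin.comp_ofReal

theorem hasDerivAt_cos_mul_ofReal (β : ℂ) (z : ℝ) :
    HasDerivAt (fun x : ℝ => cos (β * x)) (-sin (β * z) * β) z := by
  simpa using ((hasDerivAt_id (z : ℂ)).const_mul β).ccos.comp_ofReal

theorem mul_sin_add_deriv_mul_cos_eq {β : ℂ} {Z : ℝ → ℂ}
    (hZ : Differentiable ℝ Z) (hZ' : Differentiable ℝ (deriv Z))
    (hODE : ∀ z, deriv (deriv Z) z = -β ^ 2 * Z z) (x y : ℝ) :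
    β * Z x * sin (β * x) + deriv Z x * cos (β * x) =
      β * Z y * sin (β * y) + deriv Z y * cos (β * y) := by
  have hderiv (z : ℝ) : HasDerivAt
      (fun x => β * Z x * sin (β * x) + deriv Z x * cos (β * x)) 0 z := by
    have hZ'z : HasDerivAt (deriv Z) (-β ^ 2 * Z z) z := hODE z ▸ (hZ' z).hasDerivAt
    exact ((((hZ z).hasDerivAt.const_mul β).mul (hasDerivAt_sin_mul_ofReal β z)).add
      (hZ'z.mul (hasDerivAt_cos_mul_ofReal β z))).congr_deriv (by ring)
  exact is_const_of_deriv_eq_zero (fun z => (hderiv z).differentiableAt)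
    (fun z => (hderiv z).deriv) x y

/-- Damped-film version (Theorem 2, exact core): for a complex wave number `β̂ ≠ 0`
and a complex-valued solution `Z : ℝ → ℂ` of `Z'' = -β̂² Z` with
`Z'(0) = Z'(L) = K` and `sin(β̂L) ≠ 0`, one has `Z(L) = (K/β̂) tan(β̂L/2)`. -/
theorem stmt_3 (β : ℂ) (hβ : β ≠ 0) (L : ℝ) (K : ℂ)
    (hsin : Complex.sin (β * L) ≠ 0) (Z : ℝ → ℂ)
    (hZ : Differentiable ℝ Z) (hZ' : Differentiable ℝ (deriv Z))
    (hODE : ∀ z, deriv (deriv Z) z = -β ^ 2 * Z z)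
    (h0 : deriv Z 0 = K) (hL : deriv Z L = K) :
    Z L = (K / β) * Complex.tan (β * L / 2) := by
  have hinv := mul_sin_add_deriv_mul_cos_eq hZ hZ' hODE L 0
  simp only [hL, h0, ofReal_zero, mul_zero, sin_zero, cos_zero, mul_one] at hinv
  rw [← one_sub_cos_div_sin hsin]
  field_simp
  linear_combination hinv
end

section
/- Let m, L, C, Γ_m, Γ_LC, G, Ω, ω_r be real numbers with m ≠ 0, L ≠ 0, C ≠ 0 and ω_r² = 1/(LC), and let δx, δp, δq, δφ, δV be complex numbers satisfying the frequency-domain equations: −iΩδx = δp/m; −iΩδp = −mω_r²δx − Γ_mδp − Gδq; −iΩδq = δφ/L; −iΩδφ = −δq/C − Γ_LCδφ − Gδx + δV. Define χ_m = 1/(m(ω_r² − Ω² − iΩΓ_m)) and χ_LC = 1/(L(ω_r² − Ω² − iΩΓ_LC)), assuming ω_r² − Ω² − iΩΓ_m ≠ 0, ω_r² − Ω² − iΩΓ_LC ≠ 0, and χ_m⁻¹ − G²χ_LC ≠ 0. Then |δx|² = |G·(χ_m⁻¹ − G²χ_LC)⁻¹·χ_LC|²·|δV|². -/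
open Complex

/-! Substituting the momenta (`δp`, `δφ`) into the force equations turns each oscillator into
`χ⁻¹ · coordinate = force`: the film is driven by `-G δq`, the LC circuit by `δV - G δx`.
Solving this 2×2 linear system for `δx` gives `δx = -G χ_m^eff χ_LC δV`, and the transfer
function is the squared modulus of the prefactor. -/

theorem oscillator_response_eq {m ω Γ Ω x p F : ℂ} (hm : m ≠ 0)
    (hx : -I * Ω * x = p / m) (hp : -I * Ω * p = -(m * ω ^ 2) * x - Γ * p + F) :
    m * (ω ^ 2 - Ω ^ 2 - I * Ω * Γ) * x = F := by
  have hp_eq : p = -I * Ω * m * x := by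
    field_simp at hx
    linear_combination -hx
  subst hp_eq
  linear_combination hp - m * Ω ^ 2 * x * I_sq

theorem coupled_response_eq {K : Type*} [Field K] {χ₁ χ₂ G x q V : K} (hχ₂ : χ₂ ≠ 0)
    (heff : χ₁⁻¹ - G ^ 2 * χ₂ ≠ 0) (hx : χ₁⁻¹ * x = -G * q) (hq : χ₂⁻¹ * q = V - G * x) :
    x = -(G * (χ₁⁻¹ - G ^ 2 * χ₂)⁻¹ * χ₂) * V := by
  have hq' : q = χ₂ * (V - G * x) := by
    rw [← hq, mul_inv_cancel_left₀ hχ₂]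
  have hlin : (χ₁⁻¹ - G ^ 2 * χ₂) * x = -(G * χ₂) * V := by
    rw [hq'] at hx
    linear_combination hx
  rw [← inv_mul_cancel_left₀ heff x, hlin]
  ring

theorem stmt_9_general (m L C Γm ΓLC G Ω ωr : ℝ)
    (hm : m ≠ 0) (hL : L ≠ 0) (hres : ωr ^ 2 = 1 / (L * C))
    (δx δp δq δφ δV : ℂ)
    (h1 : -I * Ω * δx = δp / m)
    (h2 : -I * Ω * δp = -m * ωr ^ 2 * δx - Γm * δp - G * δq)
    (h3 : -I * Ω * δq = δφ / L)
    (h4 : -I * Ω * δφ = -δq / C - ΓLC * δφ - G * δx + δV)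
    (χm χLC : ℂ)
    (hχm : χm = 1 / (m * ((ωr ^ 2 : ℂ) - Ω ^ 2 - I * Ω * Γm)))
    (hχLC : χLC = 1 / (L * ((ωr ^ 2 : ℂ) - Ω ^ 2 - I * Ω * ΓLC)))
    (hLC0 : (ωr ^ 2 : ℂ) - Ω ^ 2 - I * Ω * ΓLC ≠ 0)
    (heff : χm⁻¹ - G ^ 2 * χLC ≠ 0) :
    ‖δx‖ ^ 2 =
      ‖G * (χm⁻¹ - G ^ 2 * χLC)⁻¹ * χLC‖ ^ 2 * ‖δV‖ ^ 2 := by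
  have hLc : (L : ℂ) ≠ 0 := by exact_mod_cast hL
  have hCinv : (C : ℂ)⁻¹ = L * ωr ^ 2 := by
    rw [← ofReal_pow, hres]
    push_cast
    field_simp
  have hfilm : χm⁻¹ * δx = -G * δq := by
    rw [hχm, one_div, inv_inv]
    exact oscillator_response_eq (by exact_mod_cast hm) h1 (by linear_combination h2)
  have hcircuit : χLC⁻¹ * δq = δV - G * δx := by
    rw [hχLC, one_div, inv_inv]
    exact oscillator_response_eq hLc h3 (by rw [← hCinv]; linear_combination h4)
  have hχLC0 : χLC ≠ 0 := by
    rw [hχLC]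
    exact one_div_ne_zero (mul_ne_zero hLc hLC0)
  rw [coupled_response_eq hχLC0 heff hfilm hcircuit, norm_mul, norm_neg, mul_pow]

/-- Theorem 5 (transfer function of the piezo-opto-electro-mechanical system):
the frequency-domain first-order perturbation equations imply
`|δx|² = |G (χ_m⁻¹ − G²χ_LC)⁻¹ χ_LC|² |δV|²`. -/
theorem stmt_9 (m L C Γm ΓLC G Ω ωr : ℝ)
    (hm : m ≠ 0) (hL : L ≠ 0) (hC : C ≠ 0) (hres : ωr ^ 2 = 1 / (L * C))
    (δx δp δq δφ δV : ℂ)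
    (h1 : -I * Ω * δx = δp / m)
    (h2 : -I * Ω * δp = -m * ωr ^ 2 * δx - Γm * δp - G * δq)
    (h3 : -I * Ω * δq = δφ / L)
    (h4 : -I * Ω * δφ = -δq / C - ΓLC * δφ - G * δx + δV)
    (χm χLC : ℂ)
    (hχm : χm = 1 / (m * ((ωr ^ 2 : ℂ) - Ω ^ 2 - I * Ω * Γm)))
    (hχLC : χLC = 1 / (L * ((ωr ^ 2 : ℂ) - Ω ^ 2 - I * Ω * ΓLC)))
    (hm0 : (ωr ^ 2 : ℂ) - Ω ^ 2 - I * Ω * Γm ≠ 0)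
    (hLC0 : (ωr ^ 2 : ℂ) - Ω ^ 2 - I * Ω * ΓLC ≠ 0)
    (heff : χm⁻¹ - G ^ 2 * χLC ≠ 0) :
    ‖δx‖ ^ 2 =
      ‖G * (χm⁻¹ - G ^ 2 * χLC)⁻¹ * χLC‖ ^ 2 * ‖δV‖ ^ 2 :=
  stmt_9_general m L C Γm ΓLC G Ω ωr hm hL hres δx δp δq δφ δV h1 h2 h3 h4 χm χLC hχm hχLC hLC0 heff
end

section
/- Let Γ > 0, Ω > 0 and α be real numbers with Γ ≠ 2Ω, let μ₁, μ₂ ∈ ℂ be the two distinct roots of μ² + Γμ + Ω² = 0 (so μ₁ + μ₂ = −Γ, μ₁μ₂ = Ω², μ₁ ≠ μ₂, and Re μ₁ < 0, Re μ₂ < 0), and let ω ∈ ℝ. Then ∫_{t ∈ ℝ} (α/(μ₁² − μ₂²))·((1/μ₁)e^{μ₁|t|} − (1/μ₂)e^{μ₂|t|})·e^{−iωt} dt = 2α/((Ω² − ω²)² + Γ²ω²). -/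
/-!
The correlation function is a combination of the two kernels `e^{μ|t|}`, `Re μ < 0`, whose
Fourier transforms are elementary: splitting `ℝ` at `0`,
`∫ e^{μ|t|} e^{-iωt} dt = -1/(μ + iω) - 1/(μ - iω) = -2μ/(μ² + ω²)`.
Partial fractions then collapse the difference of the two transforms to
`2α/((μ₁² + ω²)(μ₂² + ω²))`, and Vieta's formulas `μ₁ + μ₂ = -Γ`, `μ₁μ₂ = Ω²` identify this
denominator with `(Ω² - ω²)² + Γ²ω²`.
-/

open Complex MeasureTheory Set

theorem sq_add_ofReal_sq_ne_zero {c : ℂ} (hc : c.re ≠ 0) (ω : ℝ) : c ^ 2 + (ω : ℂ) ^ 2 ≠ 0 := by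
  intro h
  have hfac : (c + I * ω) * (c - I * ω) = 0 := by linear_combination h - (ω : ℂ) ^ 2 * I_sq
  rcases mul_eq_zero.1 hfac with h' | h' <;> exact hc (by simpa using congrArg re h')

section FourierExpAbs

variable {c : ℂ} (ω : ℝ)

theorem exp_mul_abs_mul_exp_of_nonneg {t : ℝ} (ht : 0 ≤ t) :
    Complex.exp (c * |t|) * Complex.exp (-I * ω * t) = Complex.exp ((c - I * ω) * t) := by
  rw [abs_of_nonneg ht, ← Complex.exp_add]
  ring_nf

theorem exp_mul_abs_mul_exp_of_nonpos {t : ℝ} (ht : t ≤ 0) :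
    Complex.exp (c * |t|) * Complex.exp (-I * ω * t) = Complex.exp ((-c - I * ω) * t) := by
  rw [abs_of_nonpos ht, ← Complex.exp_add]
  push_cast
  ring_nf

variable (hc : c.re < 0)
include hc

theorem integrableOn_exp_mul_abs_mul_exp_Iic :
    IntegrableOn (fun t : ℝ ↦ Complex.exp (c * |t|) * Complex.exp (-I * ω * t)) (Iic 0) :=
  (integrableOn_exp_mul_complex_Iic (a := -c - I * ω) (by simpa using hc) 0).congr_fun
    (fun _ ht ↦ (exp_mul_abs_mul_exp_of_nonpos ω ht).symm) measurableSet_Iic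

theorem integrableOn_exp_mul_abs_mul_exp_Ioi :
    IntegrableOn (fun t : ℝ ↦ Complex.exp (c * |t|) * Complex.exp (-I * ω * t)) (Ioi 0) :=
  (integrableOn_exp_mul_complex_Ioi (a := c - I * ω) (by simpa using hc) 0).congr_fun
    (fun _ ht ↦ (exp_mul_abs_mul_exp_of_nonneg ω (le_of_lt ht)).symm) measurableSet_Ioi

theorem integrable_exp_mul_abs_mul_exp :
    Integrable (fun t : ℝ ↦ Complex.exp (c * |t|) * Complex.exp (-I * ω * t)) := by
  rw [← integrableOn_univ, ← Iic_union_Ioi (a := (0 : ℝ)), integrableOn_union]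
  exact ⟨integrableOn_exp_mul_abs_mul_exp_Iic ω hc, integrableOn_exp_mul_abs_mul_exp_Ioi ω hc⟩

theorem integral_exp_mul_abs_mul_exp :
    ∫ t : ℝ, Complex.exp (c * |t|) * Complex.exp (-I * ω * t) = -2 * c / (c ^ 2 + ω ^ 2) := by
  have hneg : 0 < (-c - I * ω).re := by simpa using hc
  have hpos : (c - I * ω).re < 0 := by simpa using hc
  rw [← intervalIntegral.integral_Iic_add_Ioi (integrableOn_exp_mul_abs_mul_exp_Iic ω hc)
      (integrableOn_exp_mul_abs_mul_exp_Ioi ω hc),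
    setIntegral_congr_fun measurableSet_Iic (fun _ ht ↦ exp_mul_abs_mul_exp_of_nonpos ω ht),
    setIntegral_congr_fun measurableSet_Ioi
      (fun _ ht ↦ exp_mul_abs_mul_exp_of_nonneg ω (le_of_lt ht)),
    integral_exp_mul_complex_Iic hneg, integral_exp_mul_complex_Ioi hpos]
  have hneg0 : -c - I * ω ≠ 0 := ne_zero_of_re_pos hneg
  have hpos0 : c - I * ω ≠ 0 := fun h ↦ by simp [h] at hpos
  have hsq := sq_add_ofReal_sq_ne_zero hc.ne ω
  simp only [ofReal_zero, mul_zero, Complex.exp_zero]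
  field_simp
  linear_combination 2 * c * (ω : ℂ) ^ 2 * I_sq

end FourierExpAbs

theorem integral_sub_inv_mul_exp_mul_abs_mul_exp {μ₁ μ₂ : ℂ} (h₁ : μ₁.re < 0) (h₂ : μ₂.re < 0)
    (k : ℂ) (ω : ℝ) :
    ∫ t : ℝ, k * ((1 / μ₁) * Complex.exp (μ₁ * |t|) - (1 / μ₂) * Complex.exp (μ₂ * |t|)) *
        Complex.exp (-I * ω * t) =
      2 * k * (1 / (μ₂ ^ 2 + ω ^ 2) - 1 / (μ₁ ^ 2 + ω ^ 2)) := by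
  have hμ₁ : μ₁ ≠ 0 := fun h ↦ by simp [h] at h₁
  have hμ₂ : μ₂ ≠ 0 := fun h ↦ by simp [h] at h₂
  have hsplit : (fun t : ℝ ↦
        k * ((1 / μ₁) * Complex.exp (μ₁ * |t|) - (1 / μ₂) * Complex.exp (μ₂ * |t|)) *
          Complex.exp (-I * ω * t)) =
      fun t : ℝ ↦ k / μ₁ * (Complex.exp (μ₁ * |t|) * Complex.exp (-I * ω * t)) -
        k / μ₂ * (Complex.exp (μ₂ * |t|) * Complex.exp (-I * ω * t)) := by
    ext t
    ring
  rw [hsplit, integral_sub ((integrable_exp_mul_abs_mul_exp ω h₁).const_mul _)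
      ((integrable_exp_mul_abs_mul_exp ω h₂).const_mul _),
    integral_const_mul, integral_const_mul, integral_exp_mul_abs_mul_exp ω h₁,
    integral_exp_mul_abs_mul_exp ω h₂]
  field_simp
  ring

theorem stmt_13_general (Γ Ω α : ℝ) (hΓ : 0 < Γ)
    (μ₁ μ₂ : ℂ)
    (hμne : μ₁ ≠ μ₂)
    (hsum : μ₁ + μ₂ = -(Γ : ℂ)) (hprod : μ₁ * μ₂ = (Ω : ℂ) ^ 2)
    (hre₁ : μ₁.re < 0) (hre₂ : μ₂.re < 0)
    (ω : ℝ) :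
    ∫ t : ℝ, ((α : ℂ) / (μ₁ ^ 2 - μ₂ ^ 2)) *
        ((1 / μ₁) * Complex.exp (μ₁ * |t|) - (1 / μ₂) * Complex.exp (μ₂ * |t|)) *
        Complex.exp (-I * ω * t) =
      2 * α / (((Ω ^ 2 - ω ^ 2) ^ 2 + Γ ^ 2 * ω ^ 2 : ℝ) : ℂ) := by
  have hμsq : μ₁ ^ 2 - μ₂ ^ 2 ≠ 0 := by
    rw [sq_sub_sq, hsum]
    exact mul_ne_zero (neg_ne_zero.mpr (ofReal_ne_zero.mpr hΓ.ne')) (sub_ne_zero.mpr hμne)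
  have hden : (((Ω ^ 2 - ω ^ 2) ^ 2 + Γ ^ 2 * ω ^ 2 : ℝ) : ℂ) =
      (μ₁ ^ 2 + ω ^ 2) * (μ₂ ^ 2 + ω ^ 2) := by
    push_cast
    linear_combination (2 * (ω : ℂ) ^ 2 - μ₁ * μ₂ - (Ω : ℂ) ^ 2) * hprod -
      (ω : ℂ) ^ 2 * (μ₁ + μ₂ - (Γ : ℂ)) * hsum
  have h₁ := sq_add_ofReal_sq_ne_zero hre₁.ne ω
  have h₂ := sq_add_ofReal_sq_ne_zero hre₂.ne ω
  rw [integral_sub_inv_mul_exp_mul_abs_mul_exp hre₁ hre₂, hden]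
  field_simp
  ring

/-- Theorem 6 (film thermal noise power spectrum): Fourier transforming the
stationary correlation function of the white-noise–driven damped oscillator gives
`∫ (α/(μ₁²−μ₂²))((1/μ₁)e^{μ₁|t|} − (1/μ₂)e^{μ₂|t|}) e^{−iωt} dt
  = 2α/((Ω²−ω²)² + Γ²ω²)`. -/
theorem stmt_13 (Γ Ω α : ℝ) (hΓ : 0 < Γ) (hΩ : 0 < Ω) (hne : Γ ≠ 2 * Ω)
    (μ₁ μ₂ : ℂ)
    (hroot₁ : μ₁ ^ 2 + Γ * μ₁ + Ω ^ 2 = 0)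
    (hroot₂ : μ₂ ^ 2 + Γ * μ₂ + Ω ^ 2 = 0)
    (hμne : μ₁ ≠ μ₂)
    (hsum : μ₁ + μ₂ = -(Γ : ℂ)) (hprod : μ₁ * μ₂ = (Ω : ℂ) ^ 2)
    (hre₁ : μ₁.re < 0) (hre₂ : μ₂.re < 0)
    (ω : ℝ) :
    ∫ t : ℝ, ((α : ℂ) / (μ₁ ^ 2 - μ₂ ^ 2)) *
        ((1 / μ₁) * Complex.exp (μ₁ * |t|) - (1 / μ₂) * Complex.exp (μ₂ * |t|)) *
        Complex.exp (-I * ω * t) =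
      2 * α / (((Ω ^ 2 - ω ^ 2) ^ 2 + Γ ^ 2 * ω ^ 2 : ℝ) : ℂ) :=
  stmt_13_general Γ Ω α hΓ μ₁ μ₂ hμne hsum hprod hre₁ hre₂ ω
end
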